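/- Let Σ₁ = diag(s₁²/12, 0) and let Σ₂ be the rank-one matrix (s₂²/12)·vvᵀ with v = (cos θ, sin θ). Then the squared Bures distance tr(Σ₁ + Σ₂ − 2(Σ₁^{1/2} Σ₂ Σ₁^{1/2})^{1/2}) equals s₁²/12 + s₂²/12 − (s₁ s₂/6)·cos θ, for θ ∈ [0, π/2]. -/

import Mathlib

/-!
`Σ₁^{1/2} = diag(s₁/√12, 0)`, so conjugating `Σ₂` by it keeps only the `(0,0)` entry:
`Σ₁^{1/2} Σ₂ Σ₁^{1/2} = diag(s₁² s₂² cos²θ / 144, 0)`, whose square root is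
`diag(s₁ s₂ cos θ / 12, 0)` because `cos θ ≥ 0`. The trace then follows from `cos²θ + sin²θ = 1`.
-/

open Classical Matrix Real

/-- The positive semidefinite square root of a real matrix (junk value `0` if not PSD). -/
noncomputable def psdSqrt {n : ℕ} (A : Matrix (Fin n) (Fin n) ℝ) : Matrix (Fin n) (Fin n) ℝ :=
  if h : A.PosSemidef then
    (h.1.eigenvectorUnitary : Matrix (Fin n) (Fin n) ℝ) * diagonal (Real.sqrt ∘ h.1.eigenvalues) *
      (star h.1.eigenvectorUnitary : Matrix (Fin n) (Fin n) ℝ)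
  else 0

section
open scoped MatrixOrder

variable {n : ℕ}

lemma psdSqrt_eq_cfcSqrt {A : Matrix (Fin n) (Fin n) ℝ} (hA : A.PosSemidef) :
    psdSqrt A = CFC.sqrt A := by
  rw [CFC.sqrt_eq_real_sqrt A hA.nonneg, cfcₙ_eq_cfc (hf0 := Real.sqrt_zero), hA.1.cfc_eq,
    IsHermitian.cfc, Unitary.conjStarAlgAut_apply, psdSqrt, dif_pos hA]
  rfl

lemma psdSqrt_eq_of_mul_self {A B : Matrix (Fin n) (Fin n) ℝ} (hB : B.PosSemidef)
    (hBA : B * B = A) : psdSqrt A = B := by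
  have hA : A.PosSemidef := by
    rw [← hBA]
    simpa only [hB.1.eq] using posSemidef_conjTranspose_mul_self B
  rw [psdSqrt_eq_cfcSqrt hA, CFC.sqrt_unique hBA hB.nonneg]

lemma psdSqrt_diagonal {d : Fin n → ℝ} (hd : 0 ≤ d) :
    psdSqrt (diagonal d) = diagonal (fun i => √(d i)) := by
  refine psdSqrt_eq_of_mul_self (posSemidef_diagonal_iff.mpr fun i => Real.sqrt_nonneg _) ?_
  rw [diagonal_mul_diagonal]
  exact congrArg diagonal (funext fun i => Real.mul_self_sqrt (hd i))

end

lemma diagonal_fin_two_mul_mul_diagonal {R : Type*} [CommRing R] (r : R)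
    (M : Matrix (Fin 2) (Fin 2) R) :
    diagonal ![r, 0] * M * diagonal ![r, 0] = diagonal ![r ^ 2 * M 0 0, 0] := by
  ext i j
  fin_cases i <;> fin_cases j <;> simp [mul_apply, Fin.sum_univ_two]; ring

/-- For `Σ₁ = diag(s₁²/12, 0)` and the rank-one matrix `Σ₂ = (s₂²/12)·vvᵀ` with
`v = (cos θ, sin θ)` and `θ ∈ [0, π/2]`, the squared Bures distance
`tr(Σ₁ + Σ₂ − 2 (Σ₁^{1/2} Σ₂ Σ₁^{1/2})^{1/2})` equals
`s₁²/12 + s₂²/12 − (s₁ s₂ / 6) cos θ`. -/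
theorem bures_sq_segments (s₁ s₂ θ : ℝ) (hs₁ : 0 < s₁) (hs₂ : 0 < s₂)
    (hθ : θ ∈ Set.Icc 0 (π / 2)) :
    (Matrix.diagonal ![s₁ ^ 2 / 12, 0] + (s₂ ^ 2 / 12) • vecMulVec ![cos θ, sin θ] ![cos θ, sin θ]
        - (2 : ℝ) • psdSqrt (psdSqrt (Matrix.diagonal ![s₁ ^ 2 / 12, 0]) *
            ((s₂ ^ 2 / 12) • vecMulVec ![cos θ, sin θ] ![cos θ, sin θ]) *
            psdSqrt (Matrix.diagonal ![s₁ ^ 2 / 12, 0]))).trace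
      = s₁ ^ 2 / 12 + s₂ ^ 2 / 12 - s₁ * s₂ / 6 * cos θ := by
  have hcos : 0 ≤ cos θ := cos_nonneg_of_mem_Icc ⟨by linarith [pi_pos, hθ.1], hθ.2⟩
  have hsqrt_diag (x : ℝ) (hx : 0 ≤ x) : psdSqrt (diagonal ![x, 0]) = diagonal ![√x, 0] := by
    rw [psdSqrt_diagonal fun i => by fin_cases i <;> simp [hx]]
    congr 1
    ext i
    fin_cases i <;> simp
  have hentry : ((s₂ ^ 2 / 12) • vecMulVec ![cos θ, sin θ] ![cos θ, sin θ]) 0 0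
      = s₂ ^ 2 / 12 * cos θ ^ 2 := by
    simp [sq]
  have hcross : √(√(s₁ ^ 2 / 12) ^ 2 * (s₂ ^ 2 / 12 * cos θ ^ 2)) = s₁ * s₂ / 12 * cos θ := by
    rw [sq_sqrt (by positivity), ← sqrt_sq (by positivity : 0 ≤ s₁ * s₂ / 12 * cos θ)]
    ring_nf
  rw [hsqrt_diag _ (by positivity), diagonal_fin_two_mul_mul_diagonal, hentry,
    hsqrt_diag _ (by positivity), hcross]
  simp only [trace_sub, trace_add, trace_smul, trace_vecMulVec, trace_fin_two, diagonal_apply_eq,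
    cons_val_zero, cons_val_one, cons_val_fin_one, dotProduct_cons, dotProduct_of_isEmpty,
    head_cons, tail_cons, smul_eq_mul]
  linear_combination (s₂ ^ 2 / 12) * sin_sq_add_cos_sq θ
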